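/- Fix 1 ≤ p < ∞ and k ∈ ℕ, let Z be a topological space, and let c : Z × [0,1] → L^p([0,1], ℝ^k) be continuous. Define H̃ : Z × [0,1] → L^p([0,1], ℝ^k) as follows: for s > 0, H̃(ζ, s) is the (equivalence class of the) function t ↦ c(ζ, s)(t/(2 − s)) for t ∈ [0, 1 − s/2] and t ↦ c(ζ, s)((t − 1 + s/2)/s + 1/2) for t ∈ (1 − s/2, 1]; and H̃(ζ, 0) is the function t ↦ c(ζ, 0)(t/2). Then H̃ is continuous on Z × [0,1] with respect to the L^p-norm topology on the target. -/

import Mathlib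

open MeasureTheory Filter Set
open scoped ENNReal NNReal Topology

noncomputable def st10phi (s t : ℝ) : ℝ :=
  if t ≤ 1 - s/2 then t/(2-s) else (t-1+s/2)/s + 1/2

lemma st10phi_measurable (s : ℝ) : Measurable (st10phi s) := by
  unfold st10phi
  exact Measurable.ite (measurableSet_le measurable_id measurable_const)
    (measurable_id.div_const _)
    ((((measurable_id.sub_const _).add_const _).div_const _).add_const _)

lemma st10_lint_affine {a : ℝ} (ha : 0 < a) (b : ℝ) (g : ℝ → ℝ≥0∞) {T : Set ℝ}
    (hT : MeasurableSet T) :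
    ∫⁻ t in (fun t => a*t+b) ⁻¹' T, g (a*t+b) ∂volume
      = ENNReal.ofReal a⁻¹ * ∫⁻ x in T, g x ∂volume := by
  set φ : ℝ → ℝ := fun t => a*t+b with hφdef
  have hφ : Measurable φ := (measurable_const_mul a).add_const b
  have hemb : MeasurableEmbedding φ := by
    have : φ = (Homeomorph.mulLeft₀ a ha.ne').trans (Homeomorph.addRight b) := rfl
    rw [this]
    exact Homeomorph.measurableEmbedding _
  have hmap : Measure.map φ volume = ENNReal.ofReal a⁻¹ • volume := by
    have h1 : φ = (· + b) ∘ (a * ·) := rfl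
    rw [h1, ← Measure.map_map (measurable_add_const b) (measurable_const_mul a),
      Real.map_volume_mul_left ha.ne', Measure.map_smul,
      map_add_right_eq_self volume b, abs_of_pos (inv_pos.mpr ha)]
  calc ∫⁻ t in φ ⁻¹' T, g (φ t) ∂volume
      = ∫⁻ x, g x ∂(Measure.map φ (volume.restrict (φ ⁻¹' T))) := (hemb.lintegral_map g).symm
    _ = ∫⁻ x, g x ∂((Measure.map φ volume).restrict T) := by
        rw [Measure.restrict_map hφ hT]
    _ = ENNReal.ofReal a⁻¹ * ∫⁻ x in T, g x ∂volume := by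
        rw [hmap, Measure.restrict_smul, lintegral_smul_measure, smul_eq_mul]

lemma st10_lintegral_comp_le (g : ℝ → ℝ≥0∞) {s : ℝ} (hs0 : 0 ≤ s) (hs1 : s ≤ 1) :
    ∫⁻ t in Icc (0:ℝ) 1, g (st10phi s t) ∂volume
      ≤ 2 * ∫⁻ t in Icc (0:ℝ) 1, g t ∂volume := by
  have h2s : (0:ℝ) < 2 - s := by linarith
  have hdom : Icc (0:ℝ) 1 = Icc 0 (1-s/2) ∪ Ioc (1-s/2) 1 :=
    (Icc_union_Ioc_eq_Icc (by linarith) (by linarith)).symm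
  have hdisj : ∀ a : ℝ, Disjoint (Icc (0:ℝ) a) (Ioc a 1) := fun a =>
    Set.disjoint_left.mpr fun x hx hx' => absurd hx.2 (not_le.mpr hx'.1)
  have hsplit : ∫⁻ t in Icc (0:ℝ) 1, g (st10phi s t) ∂volume
      = ∫⁻ t in Icc (0:ℝ) (1-s/2), g (st10phi s t) ∂volume
        + ∫⁻ t in Ioc (1-s/2) 1, g (st10phi s t) ∂volume := by
    rw [hdom, lintegral_union measurableSet_Ioc (hdisj _)]
  rw [hsplit]
  -- piece 1
  have h1 : ∫⁻ t in Icc (0:ℝ) (1-s/2), g (st10phi s t) ∂volume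
      ≤ 2 * ∫⁻ x in Icc (0:ℝ) (1/2), g x ∂volume := by
    have hc : ∫⁻ t in Icc (0:ℝ) (1-s/2), g (st10phi s t) ∂volume
        = ∫⁻ t in Icc (0:ℝ) (1-s/2), g ((2-s)⁻¹ * t + 0) ∂volume := by
      refine setLIntegral_congr_fun measurableSet_Icc (fun t ht => ?_)
      have : st10phi s t = (2-s)⁻¹ * t + 0 := by
        unfold st10phi; rw [if_pos ht.2]; field_simp; ring
      rw [this]
    have hpre : (fun t => (2-s)⁻¹ * t + 0) ⁻¹' (Icc (0:ℝ) (1/2)) = Icc 0 (1-s/2) := by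
      ext t
      simp only [mem_preimage, mem_Icc, add_zero, ← div_eq_inv_mul]
      rw [le_div_iff₀ h2s, div_le_iff₀ h2s]
      constructor <;> rintro ⟨ha, hb⟩ <;> constructor <;> nlinarith
    rw [hc, ← hpre, st10_lint_affine (inv_pos.mpr h2s) 0 g measurableSet_Icc, inv_inv]
    gcongr
    calc ENNReal.ofReal (2-s) ≤ ENNReal.ofReal 2 := ENNReal.ofReal_le_ofReal (by linarith)
      _ = 2 := ENNReal.ofReal_ofNat 2
  -- piece 2
  have h2 : ∫⁻ t in Ioc (1-s/2) 1, g (st10phi s t) ∂volume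
      ≤ ∫⁻ x in Ioc (1/2:ℝ) 1, g x ∂volume := by
    rcases eq_or_lt_of_le hs0 with hs | hs
    · rw [← hs]
      norm_num
    · set b : ℝ := (-1+s/2)/s + 1/2 with hb
      have haff : ∀ t : ℝ, s⁻¹ * t + b = (t-1+s/2)/s + 1/2 := by
        intro t; rw [hb]; field_simp; ring
      have hc : ∫⁻ t in Ioc (1-s/2) 1, g (st10phi s t) ∂volume
          = ∫⁻ t in Ioc (1-s/2) 1, g (s⁻¹ * t + b) ∂volume := by
        refine setLIntegral_congr_fun measurableSet_Ioc (fun t ht => ?_)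
        have : st10phi s t = s⁻¹ * t + b := by
          unfold st10phi; rw [if_neg (not_le.mpr ht.1), haff]
        rw [this]
      have hpre : (fun t => s⁻¹ * t + b) ⁻¹' (Ioc (1/2:ℝ) 1) = Ioc (1-s/2) 1 := by
        ext t
        simp only [mem_preimage, mem_Ioc, haff]
        have e1 : (1:ℝ)/2 < (t-1+s/2)/s + 1/2 ↔ 0 < (t-1+s/2)/s := by constructor <;> intro <;> linarith
        have e2 : (t-1+s/2)/s + 1/2 ≤ 1 ↔ (t-1+s/2)/s ≤ 1/2 := by constructor <;> intro <;> linarith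
        rw [e1, e2, lt_div_iff₀ hs, div_le_iff₀ hs]
        constructor <;> rintro ⟨ha', hb'⟩ <;> constructor <;> nlinarith
      rw [hc, ← hpre, st10_lint_affine (inv_pos.mpr hs) b g measurableSet_Ioc, inv_inv]
      calc ENNReal.ofReal s * ∫⁻ x in Ioc (1/2:ℝ) 1, g x ∂volume
          ≤ 1 * ∫⁻ x in Ioc (1/2:ℝ) 1, g x ∂volume := by
            gcongr
            exact ENNReal.ofReal_le_one.mpr hs1
        _ = _ := one_mul _
  calc ∫⁻ t in Icc (0:ℝ) (1-s/2), g (st10phi s t) ∂volume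
        + ∫⁻ t in Ioc (1-s/2) 1, g (st10phi s t) ∂volume
      ≤ 2 * ∫⁻ x in Icc (0:ℝ) (1/2), g x ∂volume + ∫⁻ x in Ioc (1/2:ℝ) 1, g x ∂volume :=
        add_le_add h1 h2
    _ ≤ 2 * ∫⁻ x in Icc (0:ℝ) (1/2), g x ∂volume + 2 * ∫⁻ x in Ioc (1/2:ℝ) 1, g x ∂volume := by
        gcongr
        exact le_mul_of_one_le_left zero_le one_le_two
    _ = 2 * (∫⁻ x in Icc (0:ℝ) (1/2), g x ∂volume + ∫⁻ x in Ioc (1/2:ℝ) 1, g x ∂volume) := by ring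
    _ = 2 * ∫⁻ t in Icc (0:ℝ) 1, g t ∂volume := by
        rw [← lintegral_union measurableSet_Ioc (hdisj _),
          Icc_union_Ioc_eq_Icc (by norm_num) (by norm_num)]

lemma st10_comp_ae {β : Type*} {f g : ℝ → β}
    (h : f =ᵐ[volume.restrict (Icc (0:ℝ) 1)] g) {s : ℝ} (hs0 : 0 ≤ s) (hs1 : s ≤ 1) :
    (fun t => f (st10phi s t)) =ᵐ[volume.restrict (Icc (0:ℝ) 1)]
      (fun t => g (st10phi s t)) := by
  set μ := volume.restrict (Icc (0:ℝ) 1) with hμ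
  have hN : μ {x | f x ≠ g x} = 0 := h
  obtain ⟨M, hNM, hMmeas, hM0⟩ := exists_measurable_superset_of_null hN
  have hkey : μ (st10phi s ⁻¹' M) = 0 := by
    have hind : ∀ t, (st10phi s ⁻¹' M).indicator (fun _ => (1:ℝ≥0∞)) t
        = M.indicator (fun _ => (1:ℝ≥0∞)) (st10phi s t) := by
      intro t
      by_cases hmem : st10phi s t ∈ M <;> simp [hmem, Set.indicator_apply]
    have h1 : μ (st10phi s ⁻¹' M) = ∫⁻ t, M.indicator (fun _ => (1:ℝ≥0∞)) (st10phi s t) ∂μ := by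
      rw [← lintegral_indicator_one (hMmeas.preimage (st10phi_measurable s))]
      exact lintegral_congr fun t => (hind t)
    have h2 : (∫⁻ t, M.indicator (fun _ => (1:ℝ≥0∞)) (st10phi s t) ∂μ)
        ≤ 2 * ∫⁻ t, M.indicator (fun _ => (1:ℝ≥0∞)) t ∂μ :=
      st10_lintegral_comp_le _ hs0 hs1
    have h4 : ∫⁻ t, M.indicator (fun _ => (1:ℝ≥0∞)) t ∂μ = μ M :=
      lintegral_indicator_one hMmeas
    rw [h4, hM0, mul_zero] at h2
    rw [h1]
    exact le_antisymm h2 zero_le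
  refine measure_mono_null ?_ hkey
  intro t ht
  exact hNM (by exact ht)

lemma st10_comp_aesm {β : Type*} [TopologicalSpace β] {f : ℝ → β}
    (hf : AEStronglyMeasurable f (volume.restrict (Icc (0:ℝ) 1))) {s : ℝ}
    (hs0 : 0 ≤ s) (hs1 : s ≤ 1) :
    AEStronglyMeasurable (fun t => f (st10phi s t)) (volume.restrict (Icc (0:ℝ) 1)) :=
  ⟨fun t => hf.mk f (st10phi s t),
    hf.stronglyMeasurable_mk.comp_measurable (st10phi_measurable s),
    st10_comp_ae hf.ae_eq_mk hs0 hs1⟩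

lemma st10_eLpNorm_comp_le {β : Type*} [NormedAddCommGroup β] {p : ℝ} (hp : 1 ≤ p)
    (f : ℝ → β) {s : ℝ} (hs0 : 0 ≤ s) (hs1 : s ≤ 1) :
    eLpNorm (fun t => f (st10phi s t)) (ENNReal.ofReal p) (volume.restrict (Icc (0:ℝ) 1))
      ≤ 2 * eLpNorm f (ENNReal.ofReal p) (volume.restrict (Icc (0:ℝ) 1)) := by
  have hp0 : 0 < p := lt_of_lt_of_le one_pos hp
  have hP0 : ENNReal.ofReal p ≠ 0 := by
    simp only [ne_eq, ENNReal.ofReal_eq_zero, not_le]; exact hp0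
  have hq : (ENNReal.ofReal p).toReal = p := ENNReal.toReal_ofReal hp0.le
  rw [eLpNorm_eq_lintegral_rpow_enorm_toReal hP0 ENNReal.ofReal_ne_top,
    eLpNorm_eq_lintegral_rpow_enorm_toReal hP0 ENNReal.ofReal_ne_top, hq]
  have hA := st10_lintegral_comp_le (fun x => (‖f x‖₊ : ℝ≥0∞) ^ p) hs0 hs1
  calc (∫⁻ t, (‖f (st10phi s t)‖₊ : ℝ≥0∞) ^ p ∂(volume.restrict (Icc (0:ℝ) 1))) ^ (1/p)
      ≤ (2 * ∫⁻ t, (‖f t‖₊ : ℝ≥0∞) ^ p ∂(volume.restrict (Icc (0:ℝ) 1))) ^ (1/p) :=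
        ENNReal.rpow_le_rpow hA (by positivity)
    _ = 2 ^ (1/p) * (∫⁻ t, (‖f t‖₊ : ℝ≥0∞) ^ p ∂(volume.restrict (Icc (0:ℝ) 1))) ^ (1/p) :=
        ENNReal.mul_rpow_of_nonneg _ _ (by positivity)
    _ ≤ 2 ^ (1:ℝ) * (∫⁻ t, (‖f t‖₊ : ℝ≥0∞) ^ p ∂(volume.restrict (Icc (0:ℝ) 1))) ^ (1/p) := by
        gcongr
        · exact one_le_two
        · rw [div_le_one hp0]; exact hp
    _ = 2 * (∫⁻ t, (‖f t‖₊ : ℝ≥0∞) ^ p ∂(volume.restrict (Icc (0:ℝ) 1))) ^ (1/p) := by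
        rw [ENNReal.rpow_one]

lemma st10phi_contAt {s₀ t : ℝ} (hs₀ : s₀ ∈ Icc (0:ℝ) 1) (ht : t ∈ Icc (0:ℝ) 1)
    (hne : t ≠ 1 - s₀/2) : ContinuousAt (fun s => st10phi s t) s₀ := by
  rcases lt_or_gt_of_ne hne with hlt | hgt
  · have hev : ∀ᶠ s in 𝓝 s₀, t < 1 - s/2 :=
      ContinuousAt.eventually_lt continuousAt_const
        ((continuousAt_const.sub (continuousAt_id.div_const 2))) hlt
    have hca : ContinuousAt (fun s : ℝ => t/(2-s)) s₀ := by
      refine ContinuousAt.div continuousAt_const (continuousAt_const.sub continuousAt_id) ?_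
      intro h; have := hs₀.2; linarith
    refine hca.congr ?_
    filter_upwards [hev] with s hs
    unfold st10phi; rw [if_pos hs.le]
  · have hs0pos : 0 < s₀ := by
      have := ht.2; linarith
    have hev1 : ∀ᶠ s in 𝓝 s₀, 1 - s/2 < t :=
      ContinuousAt.eventually_lt ((continuousAt_const.sub (continuousAt_id.div_const 2)))
        continuousAt_const hgt
    have hca : ContinuousAt (fun s : ℝ => (t-1+s/2)/s + 1/2) s₀ := by
      refine ContinuousAt.add (ContinuousAt.div ?_ continuousAt_id hs0pos.ne') continuousAt_const
      fun_prop
    refine hca.congr ?_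
    filter_upwards [hev1] with s hs
    unfold st10phi; rw [if_neg (not_le.mpr hs)]

lemma st10_mid_tendsto {β : Type*} [NormedAddCommGroup β] [MeasurableSpace β] [BorelSpace β]
    [SecondCountableTopology β]
    {p : ℝ} (hp : 1 ≤ p)
    (w : BoundedContinuousFunction ℝ β) (s₀ : Icc (0:ℝ) 1) :
    Tendsto (fun s : Icc (0:ℝ) 1 =>
        eLpNorm (fun t => w (st10phi (↑s) t) - w (st10phi (↑s₀) t)) (ENNReal.ofReal p)
          (volume.restrict (Icc (0:ℝ) 1)))
      (𝓝 s₀) (𝓝 0) := by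
  have hp0 : 0 < p := lt_of_lt_of_le one_pos hp
  have hP0 : ENNReal.ofReal p ≠ 0 := by
    simp only [ne_eq, ENNReal.ofReal_eq_zero, not_le]; exact hp0
  have hq : (ENNReal.ofReal p).toReal = p := ENNReal.toReal_ofReal hp0.le
  set μ := volume.restrict (Icc (0:ℝ) 1) with hμ
  set F : Icc (0:ℝ) 1 → ℝ → ℝ≥0∞ :=
    fun s t => (‖w (st10phi (↑s) t) - w (st10phi (↑s₀) t)‖₊ : ℝ≥0∞) ^ p with hF
  have hI : Tendsto (fun s => ∫⁻ t, F s t ∂μ) (𝓝 s₀) (𝓝 0) := by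
    have h0 : (0:ℝ≥0∞) = ∫⁻ _t, (0:ℝ≥0∞) ∂μ := by simp
    rw [h0]
    refine tendsto_lintegral_filter_of_dominated_convergence
      (fun _ => ((2:ℝ≥0∞) * ‖w‖₊) ^ p) ?_ ?_ ?_ ?_
    · refine Eventually.of_forall fun s => ?_
      have hm : Measurable fun t => w (st10phi (↑s) t) - w (st10phi (↑s₀) t) :=
        ((w.continuous.measurable).comp (st10phi_measurable _)).sub
          ((w.continuous.measurable).comp (st10phi_measurable _))
      exact ENNReal.continuous_rpow_const.measurable.comp
        ((ENNReal.continuous_coe.measurable.comp measurable_nnnorm).comp hm)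
    · refine Eventually.of_forall fun s => Eventually.of_forall fun t => ?_
      refine ENNReal.rpow_le_rpow ?_ hp0.le
      calc (‖w (st10phi (↑s) t) - w (st10phi (↑s₀) t)‖₊ : ℝ≥0∞)
          ≤ (‖w (st10phi (↑s) t)‖₊ : ℝ≥0∞) + ‖w (st10phi (↑s₀) t)‖₊ := by
            rw [← ENNReal.coe_add]
            exact ENNReal.coe_le_coe.mpr (nnnorm_sub_le _ _)
        _ ≤ (‖w‖₊ : ℝ≥0∞) + ‖w‖₊ := by
            gcongr <;> exact BoundedContinuousFunction.nnnorm_coe_le_nnnorm w _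
        _ = 2 * ‖w‖₊ := by ring
    · refine ne_of_lt ?_
      rw [lintegral_const]
      refine ENNReal.mul_lt_top ?_ ?_
      · exact ENNReal.rpow_lt_top_of_nonneg hp0.le (by finiteness)
      · rw [hμ, Measure.restrict_apply_univ, Real.volume_Icc]
        finiteness
    · have hae1 : ∀ᵐ t ∂μ, t ∈ Icc (0:ℝ) 1 := ae_restrict_mem measurableSet_Icc
      have hae2 : ∀ᵐ t ∂μ, t ≠ 1 - (↑s₀:ℝ)/2 := by
        have hsing : μ {1 - (↑s₀:ℝ)/2} = 0 := by
          rw [hμ, Measure.restrict_apply (measurableSet_singleton _)]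
          refine le_antisymm ?_ zero_le
          calc volume ({1 - (↑s₀:ℝ)/2} ∩ Icc 0 1) ≤ volume {1 - (↑s₀:ℝ)/2} :=
                measure_mono inter_subset_left
            _ = 0 := Real.volume_singleton
        have hset : {t : ℝ | ¬ t ≠ 1 - (↑s₀:ℝ)/2} = {1 - (↑s₀:ℝ)/2} := by ext x; simp
        rw [ae_iff, hset]
        exact hsing
      filter_upwards [hae1, hae2] with t ht htne
      have hphi : Tendsto (fun s : Icc (0:ℝ) 1 => st10phi (↑s) t) (𝓝 s₀)
          (𝓝 (st10phi (↑s₀) t)) :=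
        (st10phi_contAt s₀.2 ht htne).tendsto.comp continuous_subtype_val.continuousAt
      have h1 : Tendsto (fun s : Icc (0:ℝ) 1 => w (st10phi (↑s) t) - w (st10phi (↑s₀) t))
          (𝓝 s₀) (𝓝 (0 : β)) := by
        have := ((w.continuous.tendsto _).comp hphi).sub
          (tendsto_const_nhds (x := w (st10phi (↑s₀) t)))
        simpa using this
      have h2 : Tendsto (fun s : Icc (0:ℝ) 1 =>
          (‖w (st10phi (↑s) t) - w (st10phi (↑s₀) t)‖₊ : ℝ≥0∞)) (𝓝 s₀) (𝓝 0) := by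
        have := ((ENNReal.continuous_coe.comp continuous_nnnorm).tendsto (0:β)).comp h1
        simpa [Function.comp_def] using this
      have h3 := (ENNReal.continuous_rpow_const (y := p)).tendsto (0 : ℝ≥0∞) |>.comp h2
      simpa [ENNReal.zero_rpow_of_pos hp0, Function.comp_def] using h3
  -- now take rpow (1/p)
  have hrw : ∀ s : Icc (0:ℝ) 1,
      eLpNorm (fun t => w (st10phi (↑s) t) - w (st10phi (↑s₀) t)) (ENNReal.ofReal p) μ
        = (∫⁻ t, F s t ∂μ) ^ (1/p) := by
    intro s
    rw [eLpNorm_eq_lintegral_rpow_enorm_toReal hP0 ENNReal.ofReal_ne_top, hq]; rfl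
  simp only [hrw]
  have h4 := (ENNReal.continuous_rpow_const (y := 1/p)).tendsto (0 : ℝ≥0∞) |>.comp hI
  rw [show ((0:ℝ≥0∞) ^ ((1:ℝ)/p)) = 0 from
    ENNReal.zero_rpow_of_pos (by positivity)] at h4
  exact h4

lemma st10_D_tendsto {β : Type*} [NormedAddCommGroup β] [NormedSpace ℝ β] [MeasurableSpace β]
    [BorelSpace β] [SecondCountableTopology β] {p : ℝ} (hp : 1 ≤ p) {u : ℝ → β}
    (hu : MemLp u (ENNReal.ofReal p) (volume.restrict (Icc (0:ℝ) 1))) (s₀ : Icc (0:ℝ) 1) :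
    Tendsto (fun s : Icc (0:ℝ) 1 =>
        eLpNorm (fun t => u (st10phi (↑s) t) - u (st10phi (↑s₀) t)) (ENNReal.ofReal p)
          (volume.restrict (Icc (0:ℝ) 1)))
      (𝓝 s₀) (𝓝 0) := by
  have hp0 : 0 < p := lt_of_lt_of_le one_pos hp
  have hP1 : 1 ≤ ENNReal.ofReal p := ENNReal.one_le_ofReal.mpr hp
  set μ := volume.restrict (Icc (0:ℝ) 1) with hμ
  have : IsFiniteMeasure μ := by
    constructor
    rw [hμ, Measure.restrict_apply_univ, Real.volume_Icc]
    finiteness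
  have hreg : μ.WeaklyRegular := by
    rw [hμ]
    exact MeasureTheory.Measure.WeaklyRegular.restrict_of_measure_ne_top (by
      rw [Real.volume_Icc]; finiteness)
  rw [ENNReal.tendsto_nhds_zero]
  intro ε hε
  set δ : ℝ≥0∞ := min (ε/5) 1 with hδdef
  have hδ0 : δ ≠ 0 :=
    (lt_min (ENNReal.div_pos hε.ne' (by norm_num)) zero_lt_one).ne'
  have h5δ : 5 * δ ≤ ε := by
    calc (5:ℝ≥0∞) * δ ≤ 5 * (ε/5) := by gcongr; exact min_le_left _ _
      _ ≤ ε := ENNReal.mul_div_le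
  obtain ⟨w, hw, -⟩ := hu.exists_boundedContinuous_eLpNorm_sub_le ENNReal.ofReal_ne_top hδ0
  have hmid := st10_mid_tendsto (β := β) hp w s₀
  filter_upwards [ENNReal.tendsto_nhds_zero.mp hmid δ (pos_iff_ne_zero.mpr hδ0)] with s hmids
  -- decompose
  have hdecomp : (fun t => u (st10phi (↑s) t) - u (st10phi (↑s₀) t))
      = (fun t => (u - ⇑w) (st10phi (↑s) t))
        + ((fun t => w (st10phi (↑s) t) - w (st10phi (↑s₀) t))
          + fun t => (⇑w - u) (st10phi (↑s₀) t)) := by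
    funext t
    simp only [Pi.add_apply, Pi.sub_apply]
    abel
  have huw : AEStronglyMeasurable (u - ⇑w) μ :=
    hu.aestronglyMeasurable.sub w.continuous.aestronglyMeasurable
  have hwu : AEStronglyMeasurable (⇑w - u) μ :=
    w.continuous.aestronglyMeasurable.sub hu.aestronglyMeasurable
  have ha1 : AEStronglyMeasurable (fun t => (u - ⇑w) (st10phi (↑s) t)) μ :=
    st10_comp_aesm huw s.2.1 s.2.2
  have ha3 : AEStronglyMeasurable (fun t => (⇑w - u) (st10phi (↑s₀) t)) μ :=
    st10_comp_aesm hwu s₀.2.1 s₀.2.2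
  have ha2 : AEStronglyMeasurable (fun t => w (st10phi (↑s) t) - w (st10phi (↑s₀) t)) μ :=
    (((w.continuous.measurable).comp (st10phi_measurable _)).sub
      ((w.continuous.measurable).comp (st10phi_measurable _))).aestronglyMeasurable
  calc eLpNorm (fun t => u (st10phi (↑s) t) - u (st10phi (↑s₀) t)) (ENNReal.ofReal p) μ
      = eLpNorm ((fun t => (u - ⇑w) (st10phi (↑s) t))
          + ((fun t => w (st10phi (↑s) t) - w (st10phi (↑s₀) t))
            + fun t => (⇑w - u) (st10phi (↑s₀) t))) (ENNReal.ofReal p) μ := by rw [← hdecomp]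
    _ ≤ eLpNorm (fun t => (u - ⇑w) (st10phi (↑s) t)) (ENNReal.ofReal p) μ
        + eLpNorm ((fun t => w (st10phi (↑s) t) - w (st10phi (↑s₀) t))
            + fun t => (⇑w - u) (st10phi (↑s₀) t)) (ENNReal.ofReal p) μ :=
      eLpNorm_add_le ha1 (ha2.add ha3) hP1
    _ ≤ eLpNorm (fun t => (u - ⇑w) (st10phi (↑s) t)) (ENNReal.ofReal p) μ
        + (eLpNorm (fun t => w (st10phi (↑s) t) - w (st10phi (↑s₀) t)) (ENNReal.ofReal p) μ
          + eLpNorm (fun t => (⇑w - u) (st10phi (↑s₀) t)) (ENNReal.ofReal p) μ) := by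
      gcongr
      exact eLpNorm_add_le ha2 ha3 hP1
    _ ≤ 2 * eLpNorm (u - ⇑w) (ENNReal.ofReal p) μ
        + (δ + 2 * eLpNorm (⇑w - u) (ENNReal.ofReal p) μ) := by
      exact add_le_add (st10_eLpNorm_comp_le hp _ s.2.1 s.2.2)
        (add_le_add hmids (st10_eLpNorm_comp_le hp _ s₀.2.1 s₀.2.2))
    _ ≤ 2 * δ + (δ + 2 * δ) := by
      have hw' : eLpNorm (⇑w - u) (ENNReal.ofReal p) μ ≤ δ := by
        rwa [eLpNorm_sub_comm]
      exact add_le_add (mul_le_mul' le_rfl hw) (add_le_add le_rfl (mul_le_mul' le_rfl hw'))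
    _ ≤ 5 * δ := by
      rw [show (2:ℝ≥0∞) * δ + (δ + 2 * δ) = 5 * δ by ring]
    _ ≤ ε := h5δ


/-- Fix `1 ≤ p < ∞` and `k ∈ ℕ`, let `Z` be a topological space and
`c : Z × [0,1] → L^p([0,1], ℝ^k)` continuous. Define `H̃ : Z × [0,1] → L^p([0,1], ℝ^k)` by:
for `s > 0`, `H̃(ζ, s)` is a.e. equal to `t ↦ c(ζ,s)(t/(2−s))` on `[0, 1−s/2]` and
`t ↦ c(ζ,s)((t−1+s/2)/s + 1/2)` on `(1−s/2, 1]`; and `H̃(ζ, 0)` is a.e. equal to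
`t ↦ c(ζ,0)(t/2)`. Then `H̃` is continuous with respect to the `L^p`-norm topology on
the target. -/
theorem statement10 (p : ℝ) (hp : 1 ≤ p) [Fact (1 ≤ ENNReal.ofReal p)] (k : ℕ)
    {Z : Type*} [TopologicalSpace Z]
    (c : Z × Icc (0:ℝ) 1 →
      Lp (EuclideanSpace ℝ (Fin k)) (ENNReal.ofReal p) (volume.restrict (Icc (0:ℝ) 1)))
    (hc : Continuous c)
    (H : Z × Icc (0:ℝ) 1 →
      Lp (EuclideanSpace ℝ (Fin k)) (ENNReal.ofReal p) (volume.restrict (Icc (0:ℝ) 1)))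
    (hHpos : ∀ (ζ : Z) (s : Icc (0:ℝ) 1), 0 < (s : ℝ) →
      ∀ᵐ t ∂(volume.restrict (Icc (0:ℝ) 1)),
        H (ζ, s) t =
          if t ≤ 1 - (s : ℝ) / 2 then c (ζ, s) (t / (2 - (s : ℝ)))
          else c (ζ, s) ((t - 1 + (s : ℝ) / 2) / (s : ℝ) + 1 / 2))
    (hH0 : ∀ (ζ : Z) (s : Icc (0:ℝ) 1), (s : ℝ) = 0 →
      ∀ᵐ t ∂(volume.restrict (Icc (0:ℝ) 1)),
        H (ζ, s) t = c (ζ, s) (t / 2)) :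
    Continuous H := by
  have hP1 : 1 ≤ ENNReal.ofReal p := ENNReal.one_le_ofReal.mpr hp
  -- unified a.e. representation
  have hrep : ∀ x : Z × Icc (0:ℝ) 1, ⇑(H x) =ᵐ[volume.restrict (Icc (0:ℝ) 1)] fun t => (c x) (st10phi (↑x.2) t) := by
    rintro ⟨ζ, s⟩
    rcases eq_or_lt_of_le s.2.1 with h0 | hpos
    · have h := hH0 ζ s h0.symm
      have hae1 : ∀ᵐ t ∂(volume.restrict (Icc (0:ℝ) 1)), t ∈ Icc (0:ℝ) 1 := ae_restrict_mem measurableSet_Icc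
      filter_upwards [h, hae1] with t ht htIcc
      have hphi : st10phi (↑s) t = t/2 := by
        unfold st10phi
        rw [← h0]
        rw [if_pos (by linarith [htIcc.2] : t ≤ 1 - (0:ℝ)/2)]
        norm_num
      rw [ht, hphi]
    · have h := hHpos ζ s hpos
      filter_upwards [h] with t ht
      rw [ht]
      unfold st10phi
      split_ifs <;> rfl
  rw [continuous_iff_continuousAt]
  intro x₀
  have key : Tendsto (fun x => eLpNorm (⇑(H x) - ⇑(H x₀)) (ENNReal.ofReal p) (volume.restrict (Icc (0:ℝ) 1))) (𝓝 x₀) (𝓝 0) := by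
    have hbound : ∀ x : Z × Icc (0:ℝ) 1,
        eLpNorm (⇑(H x) - ⇑(H x₀)) (ENNReal.ofReal p) (volume.restrict (Icc (0:ℝ) 1))
          ≤ 2 * eLpNorm (⇑(c x) - ⇑(c x₀)) (ENNReal.ofReal p) (volume.restrict (Icc (0:ℝ) 1))
            + eLpNorm (fun t => (c x₀) (st10phi (↑x.2) t) - (c x₀) (st10phi (↑x₀.2) t)) (ENNReal.ofReal p) (volume.restrict (Icc (0:ℝ) 1)) := by
      intro x
      have he : ⇑(H x) - ⇑(H x₀) =ᵐ[volume.restrict (Icc (0:ℝ) 1)]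
          (fun t => (⇑(c x) - ⇑(c x₀)) (st10phi (↑x.2) t))
            + fun t => (c x₀) (st10phi (↑x.2) t) - (c x₀) (st10phi (↑x₀.2) t) := by
        filter_upwards [hrep x, hrep x₀] with t h1 h2
        simp only [Pi.sub_apply, Pi.add_apply, h1, h2]
        abel
      rw [eLpNorm_congr_ae he]
      refine le_trans (eLpNorm_add_le ?_ ?_ hP1) ?_
      · exact st10_comp_aesm
          ((Lp.aestronglyMeasurable (c x)).sub (Lp.aestronglyMeasurable (c x₀))) x.2.2.1 x.2.2.2
      · exact (st10_comp_aesm (Lp.aestronglyMeasurable (c x₀)) x.2.2.1 x.2.2.2).sub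
          (st10_comp_aesm (Lp.aestronglyMeasurable (c x₀)) x₀.2.2.1 x₀.2.2.2)
      · exact add_le_add (st10_eLpNorm_comp_le hp _ x.2.2.1 x.2.2.2) le_rfl
    have hne : ∀ x, eLpNorm (⇑(c x) - ⇑(c x₀)) (ENNReal.ofReal p) (volume.restrict (Icc (0:ℝ) 1)) ≠ ⊤ := fun x => by
      rw [← eLpNorm_congr_ae (Lp.coeFn_sub (c x) (c x₀))]
      exact Lp.eLpNorm_ne_top _
    have heq : ∀ x, eLpNorm (⇑(c x) - ⇑(c x₀)) (ENNReal.ofReal p) (volume.restrict (Icc (0:ℝ) 1)) = ENNReal.ofReal (dist (c x) (c x₀)) :=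
      fun x => by rw [Lp.dist_def, ENNReal.ofReal_toReal (hne x)]
    have h1 : Tendsto (fun x => 2 * eLpNorm (⇑(c x) - ⇑(c x₀)) (ENNReal.ofReal p) (volume.restrict (Icc (0:ℝ) 1))) (𝓝 x₀) (𝓝 0) := by
      have hdist : Tendsto (fun x => dist (c x) (c x₀)) (𝓝 x₀) (𝓝 0) :=
        tendsto_iff_dist_tendsto_zero.mp (hc.tendsto x₀)
      have h2' : Tendsto (fun x => ENNReal.ofReal (dist (c x) (c x₀))) (𝓝 x₀) (𝓝 0) := by
        have := (ENNReal.continuous_ofReal.tendsto 0).comp hdist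
        simpa [Function.comp_def] using this
      simp only [heq]
      have := ENNReal.Tendsto.const_mul (a := 2) h2' (Or.inr (by norm_num))
      simpa using this
    have h2 : Tendsto
        (fun x : Z × Icc (0:ℝ) 1 =>
          eLpNorm (fun t => (c x₀) (st10phi (↑x.2) t) - (c x₀) (st10phi (↑x₀.2) t)) (ENNReal.ofReal p) (volume.restrict (Icc (0:ℝ) 1)))
        (𝓝 x₀) (𝓝 0) := by
      have hD := st10_D_tendsto hp (Lp.memLp (c x₀)) x₀.2
      exact hD.comp ((continuous_snd.tendsto x₀))
    have hsum := h1.add h2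
    rw [add_zero] at hsum
    exact tendsto_of_tendsto_of_tendsto_of_le_of_le tendsto_const_nhds hsum
      (fun x => zero_le) hbound
  rw [ContinuousAt, tendsto_iff_dist_tendsto_zero]
  have := (ENNReal.tendsto_toReal (a := 0) (by simp)).comp key
  simp only [Function.comp_def, ENNReal.toReal_zero] at this
  simpa only [Lp.dist_def] using this
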